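/- arXiv:2205.09964 — 7 statements merged into one kernel-verified Lean document; each statement's English description precedes it below -/
import Mathlib

section
/- For every f ∈ A there exists a nonzero element h ∈ A such that: (i) there exists a k-algebra homomorphism g : A → k with g(h) ≠ 0; and (ii) for every k-algebra homomorphism g : A → k with g(h) ≠ 0, the value ‖x(g•f)‖ equals the supremum of ‖x(g'•f)‖ over all k-algebra homomorphisms g' : A → k. In particular this supremum is finite and is attained on a nonempty Zariski-open set of k-points. -/
/-!
Write `Δ f = ∑ aᵢ ⊗ bᵢ`, so that `x (g • f) = ∑ g(aᵢ) x(bᵢ)` lies in the finite-dimensional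
`k`-subspace `V` of `L` spanned by the `x(bᵢ)`. Since `‖·‖` is non-Archimedean and trivial on `k`,
it takes only finitely many values on `V`, so the supremum `M` is attained, say at `g₀`. If
`M ≠ 0`, the ball `{y | ‖y‖ < M}` is a `k`-subspace of `L` not containing `x (g₀ • f)`, so some
`k`-linear functional `φ` kills the ball but not `x (g₀ • f)`. Then `h = ∑ φ(x(bᵢ)) aᵢ` satisfies
`g h = φ (x (g • f))`, which is nonzero only if `‖x (g • f)‖ = M`.
-/

open TensorProduct

/-- The translate `g • f` of an element `f` of a bialgebra `A` by a `k`-point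
`g : A →ₐ[k] k`: the image of the comultiplication `Δ f ∈ A ⊗[k] A` under
`g ⊗ id` followed by the identification `k ⊗[k] A ≅ A`. -/
noncomputable def ptTranslate {k A : Type*} [CommSemiring k] [Semiring A]
    [Bialgebra k A] (g : A →ₐ[k] k) (f : A) : A :=
  (TensorProduct.lid k A)
    ((TensorProduct.map g.toLinearMap (LinearMap.id : A →ₗ[k] A))
      (Coalgebra.comul (R := k) f))

namespace Valuation

variable {k L Γ : Type*} [Field k] [Ring L] [Algebra k L] [LinearOrderedCommGroupWithZero Γ]
  (v : Valuation L Γ) [v.IsTrivialOn k]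

theorem map_smul_of_ne_zero {c : k} (hc : c ≠ 0) (y : L) : v (c • y) = v y := by
  rw [Algebra.smul_def, map_mul, IsTrivialOn.eq_one c hc, one_mul]

theorem finite_image_of_fg {V : Submodule k L} (hV : V.FG) : (v '' V).Finite := by
  classical
  obtain ⟨s, rfl⟩ := hV
  induction s using Finset.induction_on with
  | empty => simp
  | insert a s _ ih =>
    set V := Submodule.span k (s : Set L)
    -- Two points of the coset `a + V` with different values differ by an element of `V`
    -- carrying the larger value.
    have hcoset : (v '' {y | y - a ∈ V} \ v '' V).Subsingleton := by
      have key : ∀ y₁ y₂ : L, y₁ - a ∈ V → y₂ - a ∈ V → v y₁ < v y₂ → v y₂ ∈ v '' V :=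
        fun y₁ y₂ h₁ h₂ hlt => ⟨y₂ - y₁, by simpa using V.sub_mem h₂ h₁,
          v.map_sub_eq_of_lt_left hlt⟩
      rintro _ ⟨⟨y₁, h₁, rfl⟩, hn₁⟩ _ ⟨⟨y₂, h₂, rfl⟩, hn₂⟩
      rcases lt_trichotomy (v y₁) (v y₂) with hlt | heq | hgt
      · exact absurd (key y₁ y₂ h₁ h₂ hlt) hn₂
      · exact heq
      · exact absurd (key y₂ y₁ h₂ h₁ hgt) hn₁
    refine (ih.union hcoset.finite).subset ?_
    rintro _ ⟨y, hy, rfl⟩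
    rw [Finset.coe_insert, SetLike.mem_coe, Submodule.mem_span_insert] at hy
    obtain ⟨c, w, hw, rfl⟩ := hy
    rcases eq_or_ne c 0 with rfl | hc
    · exact Or.inl ⟨w, hw, by simp⟩
    by_cases hV : v (c • a + w) ∈ v '' V
    · exact Or.inl hV
    refine Or.inr ⟨⟨a + c⁻¹ • w, by simpa using V.smul_mem c⁻¹ hw, ?_⟩, hV⟩
    rw [← v.map_smul_of_ne_zero hc, smul_add, smul_inv_smul₀ hc]

theorem exists_dual_ne_zero_vanishing_lt {y₀ : L} (hy₀ : v y₀ ≠ 0) :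
    ∃ φ : Module.Dual k L, φ y₀ ≠ 0 ∧ ∀ y, v y < v y₀ → φ y = 0 := by
  let ball : Submodule k L :=
    { v.ltAddSubgroup (Units.mk0 _ hy₀) with
      smul_mem' := fun c y hy => by
        rcases eq_or_ne c 0 with rfl | hc
        · simp
        · simpa [v.map_smul_of_ne_zero hc] using hy }
  obtain ⟨φ, hφy₀, hφ⟩ :=
    ball.exists_dual_map_eq_bot_of_notMem (x := y₀) (by simp [ball]) inferInstance
  exact ⟨φ, hφy₀, fun y hy => (Submodule.mem_bot k).mp (hφ ▸ Submodule.mem_map_of_mem hy)⟩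

end Valuation

section ptTranslate

variable {k A : Type*} [CommSemiring k] [Semiring A] [Bialgebra k A]

theorem exists_apply_eq_apply_ptTranslate (φ : A →ₗ[k] k) (f : A) :
    ∃ h : A, ∀ g : A →ₐ[k] k, g h = φ (ptTranslate g f) := by
  refine ⟨TensorProduct.rid k A (TensorProduct.map LinearMap.id φ (Coalgebra.comul f)),
    fun g => ?_⟩
  unfold ptTranslate
  induction Coalgebra.comul (R := k) f using TensorProduct.induction_on with
  | zero => simp
  | tmul a b => simp [mul_comm]
  | add s t hs ht => simp [hs, ht]

theorem exists_fg_forall_ptTranslate_mem (f : A) :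
    ∃ V : Submodule k A, V.FG ∧ ∀ g : A →ₐ[k] k, ptTranslate g f ∈ V := by
  unfold ptTranslate
  induction Coalgebra.comul (R := k) f using TensorProduct.induction_on with
  | zero => exact ⟨⊥, Submodule.fg_bot, by simp⟩
  | tmul a b =>
    exact ⟨k ∙ b, Submodule.fg_span_singleton b, fun g => by
      simpa using Submodule.smul_mem _ (g a) (Submodule.mem_span_singleton_self b)⟩
  | add s t hs ht =>
    obtain ⟨V, hV, hsV⟩ := hs
    obtain ⟨W, hW, htW⟩ := ht
    exact ⟨V ⊔ W, hV.sup hW, fun g => by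
      simpa using Submodule.add_mem_sup (hsV g) (htW g)⟩

end ptTranslate

theorem Valuation.finite_range_ptTranslate {k A L Γ : Type*} [Field k] [Semiring A]
    [Bialgebra k A] [Ring L] [Algebra k L] [LinearOrderedCommGroupWithZero Γ]
    (v : Valuation L Γ) [v.IsTrivialOn k] (x : A →ₐ[k] L) (f : A) :
    (Set.range fun g : A →ₐ[k] k => v (x (ptTranslate g f))).Finite := by
  obtain ⟨V, hV, hmemV⟩ := exists_fg_forall_ptTranslate_mem (k := k) f
  refine (v.finite_image_of_fg (hV.map x.toLinearMap)).subset ?_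
  rintro _ ⟨g, rfl⟩
  exact ⟨_, Submodule.mem_map_of_mem (hmemV g), rfl⟩

theorem statement0_general
    {k A L : Type*} [Field k]
    [CommRing A] [HopfAlgebra k A]
    [Field L] [Algebra k L]
    (v : L → NNReal)
    (hmul : ∀ a b : L, v (a * b) = v a * v b)
    (hadd : ∀ a b : L, v (a + b) ≤ max (v a) (v b))
    (hzero : ∀ a : L, v a = 0 ↔ a = 0)
    (htriv : ∀ c : k, c ≠ 0 → v (algebraMap k L c) = 1)
    (x : A →ₐ[k] L) (f : A) :
    ∃ h : A, h ≠ 0 ∧ (∃ g : A →ₐ[k] k, g h ≠ 0) ∧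
      ∀ g : A →ₐ[k] k, g h ≠ 0 →
        v (x (ptTranslate g f)) = ⨆ g' : A →ₐ[k] k, v (x (ptTranslate g' f)) := by
  suffices ∃ h : A, (∃ g : A →ₐ[k] k, g h ≠ 0) ∧ ∀ g : A →ₐ[k] k, g h ≠ 0 →
      v (x (ptTranslate g f)) = ⨆ g' : A →ₐ[k] k, v (x (ptTranslate g' f)) by
    obtain ⟨h, ⟨g, hg⟩, hmax⟩ := this
    exact ⟨h, fun h0 => hg (by simp [h0]), ⟨g, hg⟩, hmax⟩
  let w : Valuation L NNReal :=
    { toFun := v, map_zero' := (hzero 0).2 rfl, map_one' := by simpa using htriv 1 one_ne_zero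
      map_mul' := hmul, map_add_le_max' := hadd }
  have : w.IsTrivialOn k := ⟨htriv⟩
  have hfin : (Set.range fun g : A →ₐ[k] k => v (x (ptTranslate g f))).Finite :=
    w.finite_range_ptTranslate x f
  have hle (g : A →ₐ[k] k) := le_ciSup hfin.bddAbove g
  obtain ⟨g₀, hg₀⟩ : ∃ g₀ : A →ₐ[k] k,
      v (x (ptTranslate g₀ f)) = ⨆ g', v (x (ptTranslate g' f)) :=
    (Set.range_nonempty_iff_nonempty.mpr ⟨Bialgebra.counitAlgHom k A⟩).csSup_mem hfin
  rcases eq_or_ne (v (x (ptTranslate g₀ f))) 0 with hM | hM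
  · refine ⟨1, ⟨g₀, by simp⟩, fun g _ => ?_⟩
    simpa [← hg₀, hM] using hle g
  obtain ⟨φ, hφ₀, hφ⟩ := w.exists_dual_ne_zero_vanishing_lt (k := k) hM
  obtain ⟨h, hh⟩ := exists_apply_eq_apply_ptTranslate (φ ∘ₗ x.toLinearMap) f
  refine ⟨h, ⟨g₀, by simpa [hh]⟩, fun g hg => le_antisymm (hle g) ?_⟩
  rw [← hg₀]
  exact not_lt.mp fun hlt => hg ((hh g).trans (hφ _ hlt))

theorem statement0
    {k A L : Type*} [Field k] [IsAlgClosed k]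
    [CommRing A] [IsDomain A] [HopfAlgebra k A]
    (hfg : Algebra.FiniteType k A)
    [Field L] [Algebra k L]
    (v : L → NNReal)
    (hmul : ∀ a b : L, v (a * b) = v a * v b)
    (hadd : ∀ a b : L, v (a + b) ≤ max (v a) (v b))
    (hzero : ∀ a : L, v a = 0 ↔ a = 0)
    (htriv : ∀ c : k, c ≠ 0 → v (algebraMap k L c) = 1)
    (x : A →ₐ[k] L) (f : A) :
    ∃ h : A, h ≠ 0 ∧ (∃ g : A →ₐ[k] k, g h ≠ 0) ∧
      ∀ g : A →ₐ[k] k, g h ≠ 0 →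
        v (x (ptTranslate g f)) = ⨆ g' : A →ₐ[k] k, v (x (ptTranslate g' f)) :=
  statement0_general v hmul hadd hzero htriv x f
end

section
/- The norm ‖·‖_x is invariant under translation by k-points: for every k-algebra homomorphism g : A → k and every f ∈ A, one has ‖g•f‖_x = ‖f‖_x. -/
/-!
Translating by `g` and then by `g'` is translating by the convolution product `g * g'`, by
coassociativity of the comultiplication. The `k`-points of a commutative Hopf algebra form a group
under convolution (the inverse of `g` is `g ∘ S`), so `g' ↦ g * g'` permutes the `k`-points and the
supremum defining `‖g • f‖ₓ` runs over the same values as the one defining `‖f‖ₓ`.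
-/

open TensorProduct

/-- `‖f‖ₓ := sup { ‖x(g • f)‖ : g : A →ₐ[k] k }`. -/
noncomputable def normx {k A L : Type*} [CommSemiring k] [Semiring A]
    [Bialgebra k A] [CommSemiring L] [Algebra k L]
    (v : L → NNReal) (x : A →ₐ[k] L) (f : A) : NNReal :=
  ⨆ g : A →ₐ[k] k, v (x (ptTranslate g f))

open WithConv

namespace Coalgebra

variable {R A : Type*} [CommSemiring R] [AddCommMonoid A] [Module R A] [Coalgebra R A]

noncomputable def translate (φ : A →ₗ[R] R) : A →ₗ[R] A :=
  (_root_.TensorProduct.lid R A).toLinearMap ∘ₗ φ.rTensor A ∘ₗ comul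

lemma Repr.translate_apply {a : A} {ι : Type*} (𝓡 : Repr R a ι) (φ : A →ₗ[R] R) :
    translate φ a = ∑ i ∈ 𝓡.index, φ (𝓡.left i) • 𝓡.right i := by
  simp [translate, ← 𝓡.eq]

lemma translate_translate (φ ψ : WithConv (A →ₗ[R] R)) (a : A) :
    translate ψ.ofConv (translate φ.ofConv a) = translate (φ * ψ).ofConv a := by
  let 𝓡 := ℛ R a
  -- apply `x ⊗ y ⊗ z ↦ φ(x) ψ(y) z` to coassociativity
  have h := congr(((_root_.TensorProduct.lid R A).toLinearMap ∘ₗ map φ.ofConv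
      ((_root_.TensorProduct.lid R A).toLinearMap ∘ₗ map ψ.ofConv LinearMap.id))
    $(sum_tmul_tmul_eq 𝓡 (fun i ↦ ℛ R (𝓡.left i)) (fun i ↦ ℛ R (𝓡.right i))))
  simp only [LinearMap.coe_comp, Function.comp_apply, map_sum, map_tmul, LinearEquiv.coe_coe,
    lid_tmul, LinearMap.id_apply] at h
  rw [𝓡.translate_apply, map_sum, 𝓡.translate_apply]
  simp only [(𝓡.left _ |> ℛ R).convMul_apply, Finset.sum_smul]
  simp_rw [map_smul, Repr.translate_apply (ℛ R _), Finset.smul_sum, mul_smul]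
  exact h.symm

end Coalgebra

lemma ptTranslate_ptTranslate {k A : Type*} [CommSemiring k] [Semiring A] [Bialgebra k A]
    (g g' : A →ₐ[k] k) (f : A) :
    ptTranslate g' (ptTranslate g f) = ptTranslate (toConv g * toConv g').ofConv f :=
  Coalgebra.translate_translate (toConv g.toLinearMap) (toConv g'.toLinearMap) f

theorem statement3_general
    {k A L : Type*} [Field k]
    [CommRing A] [HopfAlgebra k A]
    [Field L] [Algebra k L]
    (v : L → NNReal)
    (x : A →ₐ[k] L) :
    ∀ (g : A →ₐ[k] k) (f : A), normx v x (ptTranslate g f) = normx v x f := by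
  intro g f
  let mulLeft : (A →ₐ[k] k) ≃ (A →ₐ[k] k) :=
    ((WithConv.equiv _).symm.trans (Equiv.mulLeft (toConv g))).trans (WithConv.equiv _)
  simp only [normx, ptTranslate_ptTranslate]
  exact mulLeft.iSup_comp (g := fun h ↦ v (x (ptTranslate h f)))

/-- `‖·‖ₓ` is invariant under translation by `k`-points: `‖g • f‖ₓ = ‖f‖ₓ`. -/
theorem statement3
    {k A L : Type*} [Field k] [IsAlgClosed k]
    [CommRing A] [IsDomain A] [HopfAlgebra k A]
    (hfg : Algebra.FiniteType k A)
    [Field L] [Algebra k L]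
    (v : L → NNReal)
    (hmul : ∀ a b : L, v (a * b) = v a * v b)
    (hadd : ∀ a b : L, v (a + b) ≤ max (v a) (v b))
    (hzero : ∀ a : L, v a = 0 ↔ a = 0)
    (htriv : ∀ c : k, c ≠ 0 → v (algebraMap k L c) = 1)
    (x : A →ₐ[k] L) :
    ∀ (g : A →ₐ[k] k) (f : A), normx v x (ptTranslate g f) = normx v x f :=
  statement3_general v x
end

section
/- Let f ∈ A and suppose the element (id_A ⊗ x)(Δ f) of A ⊗_k L is written as Σ_{i=1}^r g_i ⊗ c_i with g₁, …, g_r ∈ A linearly independent over k and c₁, …, c_r ∈ L. Then ‖f‖_x = max_{1 ≤ i ≤ r} ‖c_i‖. -/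
/-!
By the Nullstellensatz the `k`-points of `A` separate its elements, so for `k`-linearly
independent `gᵢ` the vectors `(g gᵢ)ᵢ`, `g ∈ G(k)`, span `kʳ`. As `x (g • f) = ∑ g(gᵢ) cᵢ`,
the `k`-spans of `{x (g • f)}` and of `{cᵢ}` in `L` therefore coincide. An ultrametric
valuation that is trivial on `k` has the same supremum on a set as on its `k`-span, so both
sides of the identity are the supremum of `‖·‖` on this common span.
-/

open TensorProduct

lemma exists_algHom_apply_ne_zero {k A : Type*} [Field k] [IsAlgClosed k] [CommRing A]
    [IsReduced A] [Algebra k A] [Algebra.FiniteType k A] {a : A} (ha : a ≠ 0) :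
    ∃ g : A →ₐ[k] k, g a ≠ 0 := by
  have : IsJacobsonRing A := isJacobsonRing_of_finiteType (A := k)
  obtain ⟨m, ⟨-, hm⟩, ham⟩ : ∃ m : Ideal A, (⊥ ≤ m ∧ m.IsMaximal) ∧ a ∉ m := by
    have : a ∉ (⊥ : Ideal A).jacobson := by rwa [this.out Ideal.isRadical_bot]
    simpa [Ideal.jacobson, Ideal.mem_sInf] using this
  let := Ideal.Quotient.field m
  have : Module.Finite k (A ⧸ m) := finite_of_finite_type_of_isJacobsonRing k _
  let φ : (A ⧸ m) →ₐ[k] k := IsAlgClosed.lift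
  refine ⟨φ.comp (Ideal.Quotient.mkₐ k m), fun h => ham ?_⟩
  rw [← Ideal.Quotient.eq_zero_iff_mem]
  exact (injective_iff_map_eq_zero φ).1 φ.toRingHom.injective _ h

lemma span_range_algHom_apply_eq_top {k A ι : Type*} [Field k] [IsAlgClosed k] [CommRing A]
    [IsReduced A] [Algebra k A] [Algebra.FiniteType k A] [Fintype ι] {gs : ι → A}
    (hli : LinearIndependent k gs) :
    Submodule.span k (Set.range fun (g : A →ₐ[k] k) i => g (gs i)) = ⊤ := by
  classical
  by_contra h
  obtain ⟨φ, hφ0, hφ⟩ := (Submodule.span k _).exists_le_ker_of_lt_top (lt_top_iff_ne_top.2 h)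
  set c : ι → k := fun i => φ (Pi.single i 1)
  have hφc : ∀ y, φ y = ∑ i, y i * c i := fun y => by
    conv_lhs => rw [← Finset.univ_sum_single y, map_sum]
    refine Finset.sum_congr rfl fun i _ => ?_
    rw [← smul_eq_mul, ← map_smul, ← Pi.single_smul', smul_eq_mul, mul_one]
  have hsum : ∑ i, c i • gs i = 0 := by
    by_contra hne
    obtain ⟨g, hg⟩ := exists_algHom_apply_ne_zero (k := k) hne
    have := hφ (Submodule.subset_span ⟨g, rfl⟩)
    simp only [LinearMap.mem_ker, hφc] at this
    exact hg (by simpa [mul_comm] using this)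
  have hc : c = 0 := funext (Fintype.linearIndependent_iff.1 hli c hsum)
  exact hφ0 (LinearMap.ext fun y => by simp [hφc, hc])

lemma algHom_apply_ptTranslate {k A L : Type*} [CommSemiring k] [Semiring A] [Bialgebra k A]
    [CommSemiring L] [Algebra k L] (x : A →ₐ[k] L) (g : A →ₐ[k] k) (f : A) :
    x (ptTranslate g f) = TensorProduct.lid k L (TensorProduct.map g.toLinearMap LinearMap.id
      (TensorProduct.map LinearMap.id x.toLinearMap (Coalgebra.comul (R := k) f))) := by
  rw [ptTranslate]
  induction Coalgebra.comul (R := k) f using TensorProduct.induction_on with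
  | zero => simp
  | tmul a b => simp
  | add s t hs ht => simp only [map_add, hs, ht]

lemma span_range_ptTranslate_eq {k A L ι : Type*} [Field k] [IsAlgClosed k] [CommRing A]
    [IsReduced A] [Bialgebra k A] [Algebra.FiniteType k A] [CommSemiring L] [Algebra k L]
    [Fintype ι] (x : A →ₐ[k] L) (f : A) {gs : ι → A} {cs : ι → L}
    (hli : LinearIndependent k gs)
    (hrep : TensorProduct.map LinearMap.id x.toLinearMap (Coalgebra.comul (R := k) f) =
      ∑ i, gs i ⊗ₜ[k] cs i) :
    Submodule.span k (Set.range fun g : A →ₐ[k] k => x (ptTranslate g f)) =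
      Submodule.span k (Set.range cs) := by
  have htranslate : (fun g : A →ₐ[k] k => x (ptTranslate g f)) =
      Fintype.linearCombination k cs ∘ fun g i => g (gs i) := by
    ext g
    simp [algHom_apply_ptTranslate, hrep, Fintype.linearCombination_apply]
  rw [htranslate, Set.range_comp, ← Submodule.map_span, span_range_algHom_apply_eq_top hli,
    Submodule.map_top, Fintype.range_linearCombination]

lemma apply_le_of_mem_span {k L : Type*} [Semiring k] [AddCommMonoid L] [Module k L]
    (v : L → NNReal) (hzero : v 0 = 0) (hadd : ∀ a b : L, v (a + b) ≤ max (v a) (v b))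
    (hsmul : ∀ (c : k) (a : L), v (c • a) ≤ v a) {S : Set L} {B : NNReal}
    (hS : ∀ s ∈ S, v s ≤ B) {y : L} (hy : y ∈ Submodule.span k S) : v y ≤ B := by
  induction hy using Submodule.span_induction with
  | mem s hs => exact hS s hs
  | zero => simp [hzero]
  | add a b _ _ ha hb => exact (hadd a b).trans (max_le ha hb)
  | smul c a _ ha => exact (hsmul c a).trans ha

/-- If `(id ⊗ x)(Δ f) = ∑ i, gᵢ ⊗ cᵢ` with the `gᵢ` linearly independent over `k`,
then `‖f‖ₓ = max_i ‖cᵢ‖`. -/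
theorem statement4
    {k A L : Type*} [Field k] [IsAlgClosed k]
    [CommRing A] [IsDomain A] [HopfAlgebra k A]
    (hfg : Algebra.FiniteType k A)
    [Field L] [Algebra k L]
    (v : L → NNReal)
    (hmul : ∀ a b : L, v (a * b) = v a * v b)
    (hadd : ∀ a b : L, v (a + b) ≤ max (v a) (v b))
    (hzero : ∀ a : L, v a = 0 ↔ a = 0)
    (htriv : ∀ c : k, c ≠ 0 → v (algebraMap k L c) = 1)
    (x : A →ₐ[k] L) (f : A)
    (r : ℕ) (gs : Fin r → A) (cs : Fin r → L)
    (hli : LinearIndependent k gs)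
    (hrep : (TensorProduct.map (LinearMap.id : A →ₗ[k] A) x.toLinearMap)
        (Coalgebra.comul (R := k) f) = ∑ i, gs i ⊗ₜ[k] cs i) :
    normx v x f = Finset.univ.sup fun i => v (cs i) := by
  have := hfg
  have hv0 : v 0 = 0 := (hzero 0).2 rfl
  have hsmul : ∀ (c : k) (a : L), v (c • a) ≤ v a := by
    intro c a
    rcases eq_or_ne c 0 with rfl | hc
    · simp [hv0]
    · rw [Algebra.smul_def, hmul, htriv c hc, one_mul]
  have hspan := span_range_ptTranslate_eq x f hli hrep
  have hub : ∀ g : A →ₐ[k] k, v (x (ptTranslate g f)) ≤ Finset.univ.sup fun i => v (cs i) :=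
    fun g => apply_le_of_mem_span v hv0 hadd hsmul
      (Set.forall_mem_range.2 fun i => Finset.le_sup (f := fun i => v (cs i)) (Finset.mem_univ i))
      (by rw [← hspan]; exact Submodule.subset_span ⟨g, rfl⟩)
  have : Nonempty (A →ₐ[k] k) := ⟨Bialgebra.counitAlgHom k A⟩
  refine le_antisymm (ciSup_le hub) (Finset.sup_le fun i _ => ?_)
  exact apply_le_of_mem_span v hv0 hadd hsmul
    (Set.forall_mem_range.2 (le_ciSup ⟨_, Set.forall_mem_range.2 hub⟩))
    (by rw [hspan]; exact Submodule.subset_span ⟨i, rfl⟩)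
end

section
/- For every f ∈ A, ‖f‖_x equals the infimum, over all finite representations (id_A ⊗ x)(Δ f) = Σ_i g_i ⊗ c_i in A ⊗_k L (with g_i ∈ A, c_i ∈ L), of max_i δ(g_i)·‖c_i‖, where δ : A → ℝ≥0 is the trivial norm on A given by δ(a) = 1 if a ≠ 0 and δ(0) = 0. (This identifies ‖·‖_x with the restriction to A of the completed tensor-product seminorm of the trivial norm on A and the valuation on L.) -/
/-!
For any representation `(id ⊗ x)(Δ f) = ∑ gᵢ ⊗ cᵢ` one has `x(g • f) = ∑ g(gᵢ) cᵢ`,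
so the ultrametric inequality gives `‖f‖ₓ ≤ max δ(gᵢ)‖cᵢ‖`. Conversely, take a
representation with linearly independent `gᵢ`. By the Nullstellensatz the `k`-points of `A`
separate its elements, so the vectors `(g(gᵢ))ᵢ` span `kʳ`; hence each `cᵢ` is a `k`-linear
combination of values `x(g • f)`, and `‖cᵢ‖ ≤ ‖f‖ₓ`.
-/

open TensorProduct

open scoped Classical in
/-- The trivial norm on `A`: `δ(a) = 1` if `a ≠ 0` and `δ(0) = 0`. -/
noncomputable def trivNorm {A : Type*} [Zero A] (a : A) : NNReal :=
  if a = 0 then 0 else 1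

open scoped NNReal

section Nullstellensatz

variable {k A : Type*} [Field k] [IsAlgClosed k] [CommRing A] [Algebra k A]
  [Algebra.FiniteType k A]

theorem Ideal.exists_algHom_apply_ne_zero_of_notMem (m : Ideal A) [m.IsMaximal] {f : A}
    (hf : f ∉ m) : ∃ g : A →ₐ[k] k, g f ≠ 0 := by
  let := Ideal.Quotient.field m
  have : Module.Finite k (A ⧸ m) := finite_of_finite_type_of_isJacobsonRing k (A ⧸ m)
  let e : k ≃ₐ[k] A ⧸ m :=
    AlgEquiv.ofBijective (Algebra.ofId k (A ⧸ m)) IsAlgClosed.algebraMap_bijective_of_isIntegral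
  refine ⟨e.symm.toAlgHom.comp (Ideal.Quotient.mkₐ k m), fun h => hf ?_⟩
  rw [← Ideal.Quotient.eq_zero_iff_mem]
  simpa using congrArg e h

theorem exists_algHom_apply_ne_zero_s5 {f : A} (hf : ¬IsNilpotent f) :
    ∃ g : A →ₐ[k] k, g f ≠ 0 := by
  have : IsJacobsonRing A := isJacobsonRing_of_finiteType (A := k)
  have hf' : f ∉ (⊥ : Ideal A).jacobson := by
    rwa [← Ideal.radical_eq_jacobson, Ideal.mem_radical_iff]
  simp only [Ideal.jacobson, Ideal.mem_sInf, not_forall] at hf'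
  obtain ⟨m, ⟨-, hm⟩, hfm⟩ := hf'
  exact m.exists_algHom_apply_ne_zero_of_notMem hfm

end Nullstellensatz

section Span

variable {k V ι J : Type*} [Field k] [AddCommGroup V] [Module k V] [Fintype ι]
  {φ : J → Module.Dual k V} {u : ι → V}

theorem span_range_comp_linearCombination_eq_top (hφ : ∀ a ≠ 0, ∃ j, φ j a ≠ 0)
    (hu : LinearIndependent k u) :
    Submodule.span k (Set.range fun j => φ j ∘ₗ Fintype.linearCombination k u) = ⊤ := by
  refine Submodule.span_eq_top_of_ne_zero fun w hw => ?_
  obtain ⟨j, hj⟩ := hφ _ fun h =>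
    hw (hu.fintypeLinearCombination_injective (h.trans (map_zero _).symm))
  exact ⟨_, ⟨j, rfl⟩, hj⟩

theorem mem_span_range_sum_apply_smul (hφ : ∀ a ≠ 0, ∃ j, φ j a ≠ 0)
    (hu : LinearIndependent k u) {M : Type*} [AddCommGroup M] [Module k M] (c : ι → M)
    (i : ι) :
    c i ∈ Submodule.span k (Set.range fun j => ∑ l, φ j (u l) • c l) := by
  classical
  let T : Module.Dual k (ι → k) →ₗ[k] M :=
    ∑ l, (LinearMap.applyₗ (Pi.single l 1 : ι → k)).smulRight (c l)
  have hT : ∀ ψ, T ψ = ∑ l, ψ (Pi.single l 1) • c l := fun ψ => by simp [T]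
  have hrange : (Set.range fun j => ∑ l, φ j (u l) • c l) =
      T '' Set.range fun j => φ j ∘ₗ Fintype.linearCombination k u := by
    rw [← Set.range_comp]
    simp [Function.comp_def, hT]
  rw [hrange, ← Submodule.map_span, span_range_comp_linearCombination_eq_top hφ hu]
  convert Submodule.mem_map_of_mem (f := T) (Submodule.mem_top (x := LinearMap.proj i))
  simp [hT, Pi.single_apply]

end Span

theorem TensorProduct.exists_eq_sum_tmul_linearIndependent {k M N : Type*} [Field k]
    [AddCommGroup M] [Module k M] [AddCommGroup N] [Module k N] (t : M ⊗[k] N) :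
    ∃ (r : ℕ) (u : Fin r → M) (c : Fin r → N),
      t = ∑ i, u i ⊗ₜ[k] c i ∧ LinearIndependent k u := by
  let b := Module.Basis.ofVectorSpace k M
  obtain ⟨c, rfl⟩ := TensorProduct.eq_repr_basis_left b t
  let e := c.support.equivFin
  refine ⟨_, fun i => b (e.symm i), fun i => c (e.symm i), ?_, ?_⟩
  · rw [Finsupp.sum, ← Finset.sum_coe_sort, ← e.symm.sum_comp]
  · exact b.linearIndependent.comp _ (Subtype.val_injective.comp e.symm.injective)

theorem apply_ptTranslate_eq_sum {k A L : Type*} [CommSemiring k] [Semiring A]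
    [Bialgebra k A] [Semiring L] [Algebra k L] (x : A →ₐ[k] L) (g : A →ₐ[k] k) {f : A} {ι : Type*}
    [Fintype ι] {u : ι → A} {c : ι → L}
    (h : TensorProduct.map LinearMap.id x.toLinearMap (Coalgebra.comul (R := k) f) =
      ∑ i, u i ⊗ₜ[k] c i) :
    x (ptTranslate g f) = ∑ i, g (u i) • c i := by
  have key : x.toLinearMap ∘ₗ (TensorProduct.lid k A).toLinearMap ∘ₗ
        TensorProduct.map g.toLinearMap LinearMap.id =
      (TensorProduct.lid k L).toLinearMap ∘ₗ TensorProduct.map g.toLinearMap LinearMap.id ∘ₗ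
        TensorProduct.map LinearMap.id x.toLinearMap :=
    TensorProduct.ext' fun a b => by simp
  have := LinearMap.congr_fun key (Coalgebra.comul f)
  simp only [LinearMap.comp_apply, h] at this
  simpa [ptTranslate] using this

section Ultrametric

variable {M : Type*} [AddCommMonoid M] {v : M → ℝ≥0}

theorem IsNonarchimedean.apply_sum_le_finsetSup (hv : IsNonarchimedean v) (hv0 : v 0 = 0)
    {β : Type*} (s : Finset β) (l : β → M) : v (∑ i ∈ s, l i) ≤ s.sup fun i => v (l i) := by
  rcases s.eq_empty_or_nonempty with rfl | hs
  · simp [hv0]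
  · exact (hv.apply_sum_le_sup hs).trans_eq (Finset.sup'_eq_sup hs _)

theorem IsNonarchimedean.apply_le_of_mem_span {k : Type*} [Semiring k] [Module k M]
    (hv : IsNonarchimedean v) (hv0 : v 0 = 0) (hsmul : ∀ (c : k) (a : M), v (c • a) ≤ v a)
    {S : Set M} {C : ℝ≥0} (hS : ∀ s ∈ S, v s ≤ C) {a : M} (ha : a ∈ Submodule.span k S) :
    v a ≤ C := by
  induction ha using Submodule.span_induction with
  | mem s hs => exact hS s hs
  | zero => simp [hv0]
  | add a b _ _ ha hb => exact (hv a b).trans (max_le ha hb)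
  | smul c a _ ha => exact (hsmul c a).trans ha

end Ultrametric

theorem apply_smul_le_of_map_mul {k L : Type*} [CommSemiring k] [Semiring L] [Algebra k L]
    {v : L → ℝ≥0} (hmul : ∀ a b : L, v (a * b) = v a * v b) (hv0 : v 0 = 0)
    (htriv : ∀ c : k, c ≠ 0 → v (algebraMap k L c) = 1) (c : k) (a : L) : v (c • a) ≤ v a := by
  by_cases hc : c = 0
  · simp [hc, hv0]
  · rw [Algebra.smul_def, hmul, htriv c hc, one_mul]

theorem trivNorm_mul_le {A : Type*} [Zero A] (a : A) (b : ℝ≥0) : trivNorm a * b ≤ b := by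
  unfold trivNorm
  split_ifs <;> simp

theorem apply_smul_le_trivNorm_mul {k A M : Type*} [Semiring k] [AddCommMonoid A]
    [Module k A] [AddCommMonoid M] [Module k M] {v : M → ℝ≥0} (hv0 : v 0 = 0)
    (hsmul : ∀ (c : k) (a : M), v (c • a) ≤ v a) (g : A →ₗ[k] k) (a : A) (c : M) :
    v (g a • c) ≤ trivNorm a * v c := by
  by_cases ha : a = 0
  · simp [ha, hv0]
  · simpa [trivNorm, ha] using hsmul (g a) c

section Translates

variable {k A L : Type*} [Field k] [Ring A] [Bialgebra k A] [CommRing L] [Algebra k L]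
  {v : L → ℝ≥0} (x : A →ₐ[k] L) {f : A} {ι : Type*} [Fintype ι] {u : ι → A} {c : ι → L}

theorem apply_ptTranslate_le_sup (hv : IsNonarchimedean v) (hv0 : v 0 = 0)
    (hsmul : ∀ (a : k) (b : L), v (a • b) ≤ v b)
    (h : TensorProduct.map LinearMap.id x.toLinearMap (Coalgebra.comul (R := k) f) =
      ∑ i, u i ⊗ₜ[k] c i) (g : A →ₐ[k] k) :
    v (x (ptTranslate g f)) ≤ Finset.univ.sup fun i => trivNorm (u i) * v (c i) := by
  rw [apply_ptTranslate_eq_sum x g h]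
  exact (hv.apply_sum_le_finsetSup hv0 _ _).trans <| Finset.sup_mono_fun fun i _ =>
    apply_smul_le_trivNorm_mul hv0 hsmul g.toLinearMap (u i) (c i)

theorem normx_le_sup (hv : IsNonarchimedean v) (hv0 : v 0 = 0)
    (hsmul : ∀ (a : k) (b : L), v (a • b) ≤ v b)
    (h : TensorProduct.map LinearMap.id x.toLinearMap (Coalgebra.comul (R := k) f) =
      ∑ i, u i ⊗ₜ[k] c i) :
    normx v x f ≤ Finset.univ.sup fun i => trivNorm (u i) * v (c i) :=
  ciSup_le' (apply_ptTranslate_le_sup x hv hv0 hsmul h)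

theorem apply_ptTranslate_le_normx (hv : IsNonarchimedean v) (hv0 : v 0 = 0)
    (hsmul : ∀ (a : k) (b : L), v (a • b) ≤ v b) (g : A →ₐ[k] k) :
    v (x (ptTranslate g f)) ≤ normx v x f := by
  obtain ⟨r, u, c, h, -⟩ := TensorProduct.exists_eq_sum_tmul_linearIndependent
    (TensorProduct.map LinearMap.id x.toLinearMap (Coalgebra.comul (R := k) f))
  exact le_ciSup ⟨_, Set.forall_mem_range.2 (apply_ptTranslate_le_sup x hv hv0 hsmul h)⟩ g

theorem sup_le_normx (hsep : ∀ a : A, a ≠ 0 → ∃ g : A →ₐ[k] k, g a ≠ 0)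
    (hv : IsNonarchimedean v) (hv0 : v 0 = 0) (hsmul : ∀ (a : k) (b : L), v (a • b) ≤ v b)
    (h : TensorProduct.map LinearMap.id x.toLinearMap (Coalgebra.comul (R := k) f) =
      ∑ i, u i ⊗ₜ[k] c i) (hu : LinearIndependent k u) :
    Finset.univ.sup (fun i => trivNorm (u i) * v (c i)) ≤ normx v x f := by
  refine Finset.sup_le fun i _ => (trivNorm_mul_le _ _).trans ?_
  refine hv.apply_le_of_mem_span hv0 hsmul ?_
    (mem_span_range_sum_apply_smul (φ := fun g : A →ₐ[k] k => g.toLinearMap) hsep hu c i)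
  rintro _ ⟨g, rfl⟩
  change v (∑ l, g (u l) • c l) ≤ _
  rw [← apply_ptTranslate_eq_sum x g h]
  exact apply_ptTranslate_le_normx x hv hv0 hsmul g

end Translates

/-- `‖f‖ₓ` is the infimum, over all finite representations
`(id ⊗ x)(Δ f) = ∑ i, gᵢ ⊗ cᵢ` in `A ⊗[k] L`, of `max_i δ(gᵢ)‖cᵢ‖`;
i.e. `‖·‖ₓ` is the restriction to `A` of the tensor-product seminorm of the trivial
norm on `A` and the valuation on `L`. -/
theorem statement5
    {k A L : Type*} [Field k] [IsAlgClosed k]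
    [CommRing A] [IsDomain A] [HopfAlgebra k A]
    (hfg : Algebra.FiniteType k A)
    [Field L] [Algebra k L]
    (v : L → NNReal)
    (hmul : ∀ a b : L, v (a * b) = v a * v b)
    (hadd : ∀ a b : L, v (a + b) ≤ max (v a) (v b))
    (hzero : ∀ a : L, v a = 0 ↔ a = 0)
    (htriv : ∀ c : k, c ≠ 0 → v (algebraMap k L c) = 1)
    (x : A →ₐ[k] L) (f : A) :
    normx v x f = sInf { M : NNReal |
      ∃ (r : ℕ) (gs : Fin r → A) (cs : Fin r → L),
        (TensorProduct.map (LinearMap.id : A →ₗ[k] A) x.toLinearMap)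
            (Coalgebra.comul (R := k) f) = ∑ i, gs i ⊗ₜ[k] cs i ∧
        M = Finset.univ.sup fun i => trivNorm (gs i) * v (cs i) } := by
  have hsep (a : A) (ha : a ≠ 0) : ∃ g : A →ₐ[k] k, g a ≠ 0 :=
    have := hfg
    exists_algHom_apply_ne_zero_s5 (by rwa [isNilpotent_iff_eq_zero])
  have hv0 : v 0 = 0 := (hzero 0).2 rfl
  have hsmul := apply_smul_le_of_map_mul hmul hv0 htriv
  obtain ⟨r, u, c, h, hu⟩ := TensorProduct.exists_eq_sum_tmul_linearIndependent
    (TensorProduct.map LinearMap.id x.toLinearMap (Coalgebra.comul (R := k) f))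
  refine le_antisymm (le_csInf ⟨_, r, u, c, h, rfl⟩ ?_) ?_
  · rintro _ ⟨r', u', c', h', rfl⟩
    exact normx_le_sup x hadd hv0 hsmul h'
  · refine (csInf_le (OrderBot.bddBelow _) ?_).trans (sup_le_normx x hsep hadd hv0 hsmul h hu)
    exact ⟨r, u, c, h, rfl⟩
end

section
/- Let L be a field equipped with a non-Archimedean valuation ‖·‖ : L → ℝ≥0, and let k ⊆ L be a subfield on which the valuation is trivial (‖c‖ = 1 for all nonzero c ∈ k). Let V ⊆ L be a finite-dimensional k-linear subspace and let α > 1 be a real number. Then V admits a k-basis v₁, …, v_r such that for all scalars λ₁, …, λ_r ∈ k one has ‖Σ_j λ_j v_j‖ ≥ α⁻¹ · max_j ‖λ_j v_j‖. (Such a basis is called an α-Cartesian basis; this is the statement of BGR 2.6.2 Proposition 3 over a trivially valued ground field.) -/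
/-!
The valuation is constant on punctured `k`-lines and ultrametric, so each sublevel set
`{x | v x ≤ v y}` is a `k`-subspace, and `v x < v y` makes the sublevel subspace of `x` strictly
smaller than that of `y`. Choose a basis minimising the total dimension of the sublevel subspaces
of its vectors. If some `y = ∑ λⱼ bⱼ` had `v y < maxⱼ v (λⱼ bⱼ) = v (b_{j₀})`, replacing
`b_{j₀}` by `y` would give a basis of smaller total dimension. Hence this basis is orthogonal, i.e.
`α`-Cartesian already for `α = 1`.
-/

open Module Finset

section

variable (k : Type*) {E F : Type*} [Field k] [AddCommGroup E] [Module k E] [AddCommGroup F]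
  [Module k F]

structure IsScaleInvariantUltrametric (v : E → NNReal) : Prop where
  map_add_le_max : ∀ x y, v (x + y) ≤ max (v x) (v y)
  map_smul_le : ∀ (c : k) x, v (c • x) ≤ v x

/-- BGR's orthogonal (that is, `1`-Cartesian) families. -/
def IsCartesian {ι : Type*} [Fintype ι] (v : E → NNReal) (b : ι → E) : Prop :=
  ∀ lam : ι → k, univ.sup (fun j => v (lam j • b j)) ≤ v (∑ j, lam j • b j)

variable {k}

namespace IsScaleInvariantUltrametric

variable {v : E → NNReal}

theorem map_smul_of_ne_zero (hv : IsScaleInvariantUltrametric k v) {c : k} (hc : c ≠ 0)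
    (x : E) : v (c • x) = v x :=
  le_antisymm (hv.map_smul_le c x) (by simpa [hc] using hv.map_smul_le c⁻¹ (c • x))

theorem comp (hv : IsScaleInvariantUltrametric k v) (f : F →ₗ[k] E) :
    IsScaleInvariantUltrametric k (v ∘ f) where
  map_add_le_max x y := by simpa using hv.map_add_le_max (f x) (f y)
  map_smul_le c x := by simpa using hv.map_smul_le c (f x)

def sublevel (hv : IsScaleInvariantUltrametric k v) (y : E) : Submodule k E where
  carrier := {x | v x ≤ v y}
  add_mem' hx hy := (hv.map_add_le_max _ _).trans (max_le hx hy)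
  zero_mem' := by simpa using hv.map_smul_le 0 y
  smul_mem' c x hx := (hv.map_smul_le c x).trans hx

theorem mem_sublevel (hv : IsScaleInvariantUltrametric k v) {x y : E} :
    x ∈ hv.sublevel y ↔ v x ≤ v y := Iff.rfl

theorem finrank_sublevel_lt [FiniteDimensional k E] (hv : IsScaleInvariantUltrametric k v)
    {x y : E} (h : v x < v y) : finrank k (hv.sublevel x) < finrank k (hv.sublevel y) :=
  Submodule.finrank_lt_finrank_of_lt <| SetLike.lt_iff_le_and_exists.2
    ⟨fun _ hz => hv.mem_sublevel.2 ((hv.mem_sublevel.1 hz).trans h.le),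
      y, hv.mem_sublevel.2 le_rfl, fun hy => (hv.mem_sublevel.1 hy).not_gt h⟩

theorem exists_update_lt_of_not_isCartesian (hv : IsScaleInvariantUltrametric k v)
    {ι : Type*} [Fintype ι] [DecidableEq ι] {b : ι → E} (hb : LinearIndependent k b)
    (h : ¬ IsCartesian k v b) :
    ∃ j y, v y < v (b j) ∧ LinearIndependent k (Function.update b j y) := by
  obtain ⟨lam, j, hj⟩ : ∃ lam : ι → k, ∃ j, v (∑ i, lam i • b i) < v (lam j • b j) := by
    simpa [IsCartesian, Finset.lt_sup_iff] using h
  have hlam : lam j ≠ 0 := by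
    rintro h0
    refine hj.not_ge ?_
    simpa [h0] using hv.map_smul_le 0 (∑ i, lam i • b i)
  refine ⟨j, _, hv.map_smul_of_ne_zero hlam (b j) ▸ hj, hb.update j _
    ⟨1, one_mem _, (Finsupp.linearEquivFunOnFinite k k ι).symm lam, ?_, ?_⟩⟩
  · simpa [mem_nonZeroDivisors_iff_ne_zero] using hlam
  · rw [one_smul, Finsupp.linearCombination_eq_fintype_linearCombination_apply,
      Fintype.linearCombination_apply]

theorem exists_basis_isCartesian [FiniteDimensional k E] (hv : IsScaleInvariantUltrametric k v) :
    ∃ b : Basis (Fin (finrank k E)) k E, IsCartesian k v b := by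
  let weight : (Fin (finrank k E) → E) → ℕ := fun b => ∑ j, finrank k (hv.sublevel (b j))
  obtain ⟨b, hb, hmin⟩ := (InvImage.wf weight wellFounded_lt).has_min
    {b | LinearIndependent k b} ⟨_, (finBasis k E).linearIndependent⟩
  refine ⟨basisOfLinearIndependentOfCardEqFinrank' b hb (Fintype.card_fin _), ?_⟩
  rw [coe_basisOfLinearIndependentOfCardEqFinrank']
  by_contra hcart
  obtain ⟨j, y, hy, hind⟩ := hv.exists_update_lt_of_not_isCartesian hb hcart
  have hlt := hv.finrank_sublevel_lt hy
  refine hmin _ hind (sum_lt_sum (fun i _ => ?_) ⟨j, mem_univ j, ?_⟩)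
  · rcases eq_or_ne i j with rfl | hij
    · rw [Function.update_self]; exact hlt.le
    · rw [Function.update_of_ne hij]
  · rwa [Function.update_self]

end IsScaleInvariantUltrametric

end

theorem IsScaleInvariantUltrametric.of_map_mul {k L : Type*} [Field k] [Field L] [Algebra k L]
    {v : L → NNReal} (hmul : ∀ a b : L, v (a * b) = v a * v b)
    (hadd : ∀ a b : L, v (a + b) ≤ max (v a) (v b))
    (htriv : ∀ c : k, c ≠ 0 → v (algebraMap k L c) = 1) :
    IsScaleInvariantUltrametric k v where
  map_add_le_max := hadd
  map_smul_le c x := by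
    rw [Algebra.smul_def, hmul]
    refine mul_le_of_le_one_left zero_le ?_
    rcases eq_or_ne c 0 with rfl | hc
    · -- `v 0` is idempotent, hence `0` or `1`
      have hidem : v 0 * v 0 = v 0 := by simpa using (hmul 0 0).symm
      rw [map_zero]
      by_contra! h
      exact (lt_mul_of_one_lt_left (zero_lt_one.trans h) h).ne' hidem
    · exact (htriv c hc).le

theorem statement6_general
    {k L : Type*} [Field k] [Field L] [Algebra k L]
    (v : L → NNReal)
    (hmul : ∀ a b : L, v (a * b) = v a * v b)
    (hadd : ∀ a b : L, v (a + b) ≤ max (v a) (v b))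
    (htriv : ∀ c : k, c ≠ 0 → v (algebraMap k L c) = 1)
    (V : Submodule k L) (hV : FiniteDimensional k V)
    (α : NNReal) (hα : 1 < α) :
    ∃ (r : ℕ) (b : Fin r → L),
      (∀ j, b j ∈ V) ∧ LinearIndependent k b ∧ Submodule.span k (Set.range b) = V ∧
      ∀ lam : Fin r → k,
        α⁻¹ * (Finset.univ.sup fun j => v (lam j • b j)) ≤ v (∑ j, lam j • b j) := by
  have hvV := (IsScaleInvariantUltrametric.of_map_mul hmul hadd htriv).comp V.subtype
  obtain ⟨b, hb⟩ := hvV.exists_basis_isCartesian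
  refine ⟨_, V.subtype ∘ b, fun j => (b j).2, b.linearIndependent.map' _ V.ker_subtype, ?_,
    fun lam => ?_⟩
  · rw [Set.range_comp, Submodule.span_image, b.span_eq, Submodule.map_top,
      Submodule.range_subtype]
  · calc α⁻¹ * _ ≤ univ.sup fun j => v (lam j • (b j : L)) :=
          mul_le_of_le_one_left zero_le (inv_le_one_of_one_le₀ hα.le)
      _ ≤ v (∑ j, lam j • (b j : L)) := by simpa using hb lam

/-- Existence of `α`-Cartesian bases (BGR 2.6.2 Proposition 3 over a trivially valued
ground field): any finite-dimensional `k`-subspace `V` of a non-Archimedean valued field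
`L` whose valuation is trivial on the subfield `k` admits, for each `α > 1`, a `k`-basis
`v₁, …, v_r` with `‖∑ λⱼ vⱼ‖ ≥ α⁻¹ · max_j ‖λⱼ vⱼ‖`. -/
theorem statement6
    {k L : Type*} [Field k] [Field L] [Algebra k L]
    (v : L → NNReal)
    (hmul : ∀ a b : L, v (a * b) = v a * v b)
    (hadd : ∀ a b : L, v (a + b) ≤ max (v a) (v b))
    (hzero : ∀ a : L, v a = 0 ↔ a = 0)
    (htriv : ∀ c : k, c ≠ 0 → v (algebraMap k L c) = 1)
    (V : Submodule k L) (hV : FiniteDimensional k V)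
    (α : NNReal) (hα : 1 < α) :
    ∃ (r : ℕ) (b : Fin r → L),
      (∀ j, b j ∈ V) ∧ LinearIndependent k b ∧ Submodule.span k (Set.range b) = V ∧
      ∀ lam : Fin r → k,
        α⁻¹ * (Finset.univ.sup fun j => v (lam j • b j)) ≤ v (∑ j, lam j • b j) :=
  statement6_general v hmul hadd htriv V hV α hα
end

section
/- For every f ∈ A, the k-linear span of the set of all translates { g•f : g a k-algebra homomorphism A → k } is a finite-dimensional k-vector space. -/
/-! Writing `Δ f = ∑ aᵢ ⊗ bᵢ`, every translate `g • f = ∑ g(aᵢ) bᵢ` lies in the span of the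
finitely many `bᵢ`, whatever the `k`-point `g`. -/

open TensorProduct

namespace TensorProduct

variable {R M N : Type*} [CommSemiring R] [AddCommMonoid M] [Module R M]
  [AddCommMonoid N] [Module R N]

theorem lid_map_id_mem_of_mem_range_lTensor {N' : Submodule R N} {x : M ⊗[R] N}
    (hx : x ∈ LinearMap.range (N'.subtype.lTensor M)) (φ : M →ₗ[R] R) :
    TensorProduct.lid R N (map φ LinearMap.id x) ∈ N' := by
  obtain ⟨y, rfl⟩ := hx
  have hcomm :
      (TensorProduct.lid R N).toLinearMap ∘ₗ map φ LinearMap.id ∘ₗ N'.subtype.lTensor M =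
        N'.subtype ∘ₗ (TensorProduct.lid R N').toLinearMap ∘ₗ map φ LinearMap.id := by
    ext m n
    simp
  exact LinearMap.congr_fun hcomm y ▸ Submodule.coe_mem _

theorem exists_finite_submodule_forall_lid_map_id_mem (x : M ⊗[R] N) :
    ∃ N' : Submodule R N, Module.Finite R N' ∧
      ∀ φ : M →ₗ[R] R, TensorProduct.lid R N (map φ LinearMap.id x) ∈ N' := by
  obtain ⟨N', hfin, hx⟩ :=
    exists_finite_submodule_right_of_setFinite {x} (Set.finite_singleton x)
  exact ⟨N', hfin, lid_map_id_mem_of_mem_range_lTensor (hx rfl)⟩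

end TensorProduct

/-- The `k`-span of all translates `g • f` of a fixed element `f` of a bialgebra `A`
by `k`-points `g : A →ₐ[k] k` is finite-dimensional. -/
theorem statement7
    {k A : Type*} [Field k] [Ring A] [Bialgebra k A] (f : A) :
    FiniteDimensional k
      (Submodule.span k {a : A | ∃ g : A →ₐ[k] k, a = ptTranslate g f}) := by
  obtain ⟨V, hV, hmem⟩ :=
    exists_finite_submodule_forall_lid_map_id_mem (Coalgebra.comul (R := k) f)
  refine Submodule.finiteDimensional_of_le (S₂ := V) (Submodule.span_le.2 ?_)
  rintro _ ⟨g, rfl⟩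
  exact hmem g.toLinearMap
end

section
/- Fix x = (x₁, …, x_n) ∈ (L^×)^n and let f = Σ_{I ∈ ℤ^n} a_I t^I be a Laurent polynomial in n variables with coefficients a_I ∈ k, finitely many nonzero. For g = (g₁, …, g_n) ∈ (k^×)^n write f(g·x) = Σ_I a_I g^I x^I ∈ L, where g^I = Π_m g_m^{I_m} and x^I = Π_m x_m^{I_m}. Then sup_{g ∈ (k^×)^n} ‖f(g·x)‖ = max { ‖x^I‖ : I with a_I ≠ 0 } (the sup of the empty set being 0), and there exists a nonzero Laurent polynomial h over k such that ‖f(g·x)‖ attains this maximum for every g ∈ (k^×)^n with h(g) ≠ 0. (This shows that for the torus, the generic-translate valuation recovers the classical tropicalization.) -/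
/-- Evaluation of a Laurent polynomial `h` (a finitely supported family of coefficients
indexed by `ℤ^n`) at a point `g ∈ (k^×)^n`. -/
noncomputable def laurentEval {k : Type*} [Field k] {n : ℕ}
    (g : Fin n → kˣ) (h : (Fin n → ℤ) →₀ k) : k :=
  ∑ I ∈ h.support, h I * ∏ m, ((g m ^ I m : kˣ) : k)

/-- `f(g·x) = ∑_I a_I g^I x^I` for a Laurent polynomial `f = ∑_I a_I t^I` over `k`,
`g ∈ (k^×)^n` and `x ∈ (L^×)^n`. -/
noncomputable def translatedEval {k L : Type*} [Field k] [Field L] [Algebra k L] {n : ℕ}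
    (x : Fin n → Lˣ) (g : Fin n → kˣ) (f : (Fin n → ℤ) →₀ k) : L :=
  ∑ I ∈ f.support,
    algebraMap k L (f I * ∏ m, ((g m ^ I m : kˣ) : k)) * ∏ m, ((x m ^ I m : Lˣ) : L)

/-!
The upper bound is the ultrametric inequality. For the lower bound and genericity, pick `I₀`
maximising `‖x^I‖` over the support of `f`, and a `k`-linear functional `ψ : L → k` with
`ψ 1 ≠ 0` that vanishes on `{a | ‖a‖ < 1}`; it exists because it only has to be a functional on
the residue field, which is a `k`-vector space containing `k`. Then `f(g·x) = x^{I₀} · w` with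
`‖w‖ ≤ 1` and `ψ w = h(g)`, where `h = ∑ a_I ψ(x^I / x^{I₀}) t^I`, so `‖w‖ = 1` whenever
`h(g) ≠ 0`. The coefficient of `t^{I₀}` in `h` is `a_{I₀} ψ 1 ≠ 0`, and a nonzero Laurent
polynomial over an infinite field has a nonvanishing point by Artin's independence of
characters, which gives the supremum.
-/

open Finset

section TorusCharacter

variable {σ : Type*} [Fintype σ]

def torusCharacter {G : Type*} [CommGroup G] (I : σ → ℤ) : (σ → G) →* G where
  toFun g := ∏ m, g m ^ I m
  map_one' := by simp
  map_mul' g g' := by simp only [Pi.mul_apply, mul_zpow, prod_mul_distrib]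

lemma val_torusCharacter {M : Type*} [CommMonoid M] (I : σ → ℤ) (g : σ → Mˣ) :
    ((torusCharacter I g : Mˣ) : M) = ∏ m, ((g m ^ I m : Mˣ) : M) :=
  Units.coe_prod _ _

lemma torusCharacter_mulSingle {G : Type*} [CommGroup G] [DecidableEq σ] (I : σ → ℤ) (m : σ)
    (t : G) : torusCharacter I (Pi.mulSingle m t) = t ^ I m := by
  simp [torusCharacter, Pi.mulSingle_apply]

lemma torusCharacter_injective {G : Type*} [CommGroup G]
    (hG : ∀ d : ℤ, d ≠ 0 → ∃ t : G, t ^ d ≠ 1) :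
    Function.Injective (torusCharacter (σ := σ) (G := G)) := by
  classical
  intro I J hIJ
  funext m
  by_contra hm
  obtain ⟨t, ht⟩ := hG _ (sub_ne_zero.2 hm)
  have hIJt := DFunLike.congr_fun hIJ (Pi.mulSingle m t)
  rw [torusCharacter_mulSingle, torusCharacter_mulSingle] at hIJt
  exact ht (by rw [zpow_sub, hIJt, mul_inv_cancel])

end TorusCharacter

lemma exists_units_zpow_ne_one {k : Type*} [Field k] [Infinite k] {d : ℤ} (hd : d ≠ 0) :
    ∃ t : kˣ, t ^ d ≠ 1 := by
  classical
  obtain ⟨t, ht⟩ :=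
    Infinite.exists_notMem_finset (insert 0 (Polynomial.nthRoots d.natAbs (1 : k)).toFinset)
  rw [mem_insert, Multiset.mem_toFinset, Polynomial.mem_nthRoots (Int.natAbs_pos.2 hd),
    not_or] at ht
  refine ⟨Units.mk0 t ht.1, fun h => ht.2 ?_⟩
  rw [← pow_natAbs_eq_one] at h
  simpa using congrArg Units.val h

section LaurentEval

variable {k : Type*} [Field k] {n : ℕ}

lemma laurentEval_eq_sum_of_support_subset (g : Fin n → kˣ) {h : (Fin n → ℤ) →₀ k}
    {T : Finset (Fin n → ℤ)} (hT : h.support ⊆ T) :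
    laurentEval g h = ∑ I ∈ T, h I * ((torusCharacter I g : kˣ) : k) := by
  simp only [laurentEval, val_torusCharacter]
  exact sum_subset hT fun I _ hI => by simp [Finsupp.notMem_support_iff.mp hI]

theorem exists_laurentEval_ne_zero [Infinite k] {h : (Fin n → ℤ) →₀ k} (hh : h ≠ 0) :
    ∃ g : Fin n → kˣ, laurentEval g h ≠ 0 := by
  by_contra! hvanish
  let χ : (Fin n → ℤ) → (Fin n → kˣ) →* k := fun I => (Units.coeHom k).comp (torusCharacter I)
  have hχ : Function.Injective χ := fun I J hIJ =>
    torusCharacter_injective (fun _ hd => exists_units_zpow_ne_one hd)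
      (MonoidHom.ext fun g => Units.ext (DFunLike.congr_fun hIJ g))
  refine hh (linearIndependent_iff.1 ((linearIndependent_monoidHom _ k).comp χ hχ) h ?_)
  funext g
  simpa [Finsupp.linearCombination_apply, Finsupp.sum, χ,
    laurentEval_eq_sum_of_support_subset g subset_rfl] using hvanish g

end LaurentEval

def ultrametricValuation {L Γ₀ : Type*} [Ring L] [Nontrivial L]
    [LinearOrderedCommGroupWithZero Γ₀] (v : L → Γ₀)
    (hmul : ∀ a b : L, v (a * b) = v a * v b)
    (hadd : ∀ a b : L, v (a + b) ≤ max (v a) (v b))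
    (hzero : ∀ a : L, v a = 0 ↔ a = 0) : Valuation L Γ₀ where
  toFun := v
  map_zero' := (hzero 0).2 rfl
  map_one' := by
    have h1 : v 1 ≠ 0 := fun h => one_ne_zero ((hzero 1).1 h)
    simpa [h1] using (hmul 1 1).symm
  map_mul' := hmul
  map_add_le_max' := hadd

section TrivialOn

variable {k L Γ₀ : Type*} [Field k] [Field L] [Algebra k L] [LinearOrderedCommGroupWithZero Γ₀]
  (ν : Valuation L Γ₀) [ν.IsTrivialOn k]

theorem Valuation.map_sum_algebraMap_mul_le_sup {ι : Type*} (s : Finset ι) (b : ι → k)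
    (y : ι → L) : ν (∑ i ∈ s, algebraMap k L (b i) * y i) ≤ s.sup fun i => ν (y i) :=
  ν.map_sum_le fun i hi => by
    rw [map_mul]
    exact mul_le_of_le_one_left' (Valuation.IsTrivialOn.valuation_algebraMap_le_one ν _) |>.trans
      (le_sup (f := fun i => ν (y i)) hi)

theorem Valuation.exists_dual_one_ne_zero_vanishing_on_lt_one :
    ∃ ψ : Module.Dual k L, ψ 1 ≠ 0 ∧ ∀ a, ν a < 1 → ψ a = 0 := by
  let maxIdeal : Submodule k L :=
    { carrier := {a | ν a < 1}
      add_mem' := fun ha hb => (ν.map_add _ _).trans_lt (max_lt ha hb)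
      zero_mem' := by simp
      smul_mem' := fun c a ha => by
        rw [Set.mem_ofPred_eq, Algebra.smul_def, map_mul]
        exact (mul_le_of_le_one_left'
          (Valuation.IsTrivialOn.valuation_algebraMap_le_one ν c)).trans_lt ha }
  obtain ⟨ψ, hψ1, hψ⟩ :=
    Submodule.exists_dual_map_eq_bot_of_notMem (p := maxIdeal) (x := 1) (by simp [maxIdeal])
      inferInstance
  exact ⟨ψ, hψ1, fun a ha => (Submodule.mem_bot k).1 (hψ ▸ Submodule.mem_map_of_mem ha)⟩

theorem Valuation.map_sum_eq_of_dual_ne_zero {ψ : Module.Dual k L}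
    (hψ : ∀ a, ν a < 1 → ψ a = 0) {ι : Type*} {s : Finset ι} {y : ι → L} {i₀ : ι}
    (hy₀ : y i₀ ≠ 0) (hmax : ∀ i ∈ s, ν (y i) ≤ ν (y i₀)) {b : ι → k}
    (hb : ∑ i ∈ s, b i * ψ (y i / y i₀) ≠ 0) :
    ν (∑ i ∈ s, algebraMap k L (b i) * y i) = ν (y i₀) := by
  set w := ∑ i ∈ s, b i • (y i / y i₀)
  have hsum : ∑ i ∈ s, algebraMap k L (b i) * y i = y i₀ * w := by
    simp only [w, mul_sum, Algebra.smul_def]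
    exact sum_congr rfl fun i _ => by field_simp
  have hw_le : ν w ≤ 1 := ν.map_sum_le fun i hi => by
    rw [Algebra.smul_def, map_mul, map_div₀]
    exact mul_le_one' (Valuation.IsTrivialOn.valuation_algebraMap_le_one ν _)
      ((div_le_one₀ (ν.pos_iff.2 hy₀)).2 (hmax i hi))
  have hw : ¬ ν w < 1 := fun hlt => hb (by simpa [w, map_sum] using hψ w hlt)
  rw [hsum, map_mul, le_antisymm hw_le (not_lt.1 hw), mul_one]

end TrivialOn

section TranslatedEval

variable {k L Γ₀ : Type*} [Field k] [Field L] [Algebra k L] [LinearOrderedCommGroupWithZero Γ₀]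
  (ν : Valuation L Γ₀) [ν.IsTrivialOn k] {n : ℕ} (x : Fin n → Lˣ) (f : (Fin n → ℤ) →₀ k)

lemma translatedEval_eq_sum (g : Fin n → kˣ) :
    translatedEval x g f = ∑ I ∈ f.support,
      algebraMap k L (f I * ((torusCharacter I g : kˣ) : k)) * ((torusCharacter I x : Lˣ) : L) := by
  simp only [translatedEval, val_torusCharacter]

theorem Valuation.map_translatedEval_le (g : Fin n → kˣ) :
    ν (translatedEval x g f) ≤ f.support.sup fun I => ν (∏ m, ((x m ^ I m : Lˣ) : L)) := by
  simpa only [translatedEval_eq_sum, val_torusCharacter] using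
    ν.map_sum_algebraMap_mul_le_sup _ _ _

theorem Valuation.exists_map_translatedEval_eq_sup_of_laurentEval_ne_zero :
    ∃ h : (Fin n → ℤ) →₀ k, h ≠ 0 ∧ ∀ g : Fin n → kˣ, laurentEval g h ≠ 0 →
      ν (translatedEval x g f) = f.support.sup fun I => ν (∏ m, ((x m ^ I m : Lˣ) : L)) := by
  classical
  simp only [← val_torusCharacter]
  set y : (Fin n → ℤ) → L := fun I => (torusCharacter I x : Lˣ)
  rcases f.support.eq_empty_or_nonempty with hf | hf
  · refine ⟨Finsupp.single 0 1, by simp, fun g _ => ?_⟩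
    simpa [translatedEval, hf] using bot_unique zero_le
  obtain ⟨I₀, hI₀, hmax⟩ := f.support.exists_max_image (fun I => ν (y I)) hf
  obtain ⟨ψ, hψ1, hψ⟩ := ν.exists_dual_one_ne_zero_vanishing_on_lt_one (k := k)
  -- `h g = ψ (f(g·x) / x^{I₀})`
  let h := Finsupp.onFinset f.support (fun I => f I * ψ (y I / y I₀))
    fun I hI => Finsupp.mem_support_iff.2 (left_ne_zero_of_mul hI)
  refine ⟨h, fun h0 => ?_, fun g hg => ?_⟩
  · exact Finsupp.mem_support_iff.1 hI₀ (by simpa [h, y, hψ1] using DFunLike.congr_fun h0 I₀)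
  · rw [le_antisymm (Finset.sup_le hmax) (le_sup (f := fun I => ν (y I)) hI₀),
      translatedEval_eq_sum]
    refine ν.map_sum_eq_of_dual_ne_zero (y := y) hψ (Units.ne_zero _) hmax ?_
    rw [laurentEval_eq_sum_of_support_subset g
      (Finsupp.support_onFinset_subset (s := f.support))] at hg
    simpa [h, mul_right_comm] using hg

end TranslatedEval

/-- For the torus, the generic-translate valuation recovers the classical tropicalization:
`sup_{g ∈ (k^×)^n} ‖f(g·x)‖ = max { ‖x^I‖ : a_I ≠ 0 }`, and this maximum is attained on a
nonempty Zariski-open set of `k`-points `g` of the torus. -/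
theorem statement8
    {k L : Type*} [Field k] [IsAlgClosed k] [Field L] [Algebra k L]
    (v : L → NNReal)
    (hmul : ∀ a b : L, v (a * b) = v a * v b)
    (hadd : ∀ a b : L, v (a + b) ≤ max (v a) (v b))
    (hzero : ∀ a : L, v a = 0 ↔ a = 0)
    (htriv : ∀ c : k, c ≠ 0 → v (algebraMap k L c) = 1)
    (n : ℕ) (x : Fin n → Lˣ) (f : (Fin n → ℤ) →₀ k) :
    (⨆ g : Fin n → kˣ, v (translatedEval x g f)) =
      (f.support.sup fun I => v (∏ m, ((x m ^ I m : Lˣ) : L))) ∧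
    ∃ h : (Fin n → ℤ) →₀ k, h ≠ 0 ∧
      ∀ g : Fin n → kˣ, laurentEval g h ≠ 0 →
        v (translatedEval x g f) =
          f.support.sup fun I => v (∏ m, ((x m ^ I m : Lˣ) : L)) := by
  let ν := ultrametricValuation v hmul hadd hzero
  have : ν.IsTrivialOn k := ⟨htriv⟩
  obtain ⟨h, hh, hgeneric⟩ := ν.exists_map_translatedEval_eq_sup_of_laurentEval_ne_zero x f
  refine ⟨le_antisymm (ciSup_le (ν.map_translatedEval_le x f)) ?_, h, hh, hgeneric⟩
  obtain ⟨g₀, hg₀⟩ := exists_laurentEval_ne_zero hh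
  exact (hgeneric g₀ hg₀).ge.trans
    (le_ciSup ⟨_, Set.forall_mem_range.2 (ν.map_translatedEval_le x f)⟩ g₀)
end
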